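/- arXiv:1711.04066 — 2 statements merged into one kernel-verified Lean document; each statement's English description precedes it below -/
import Mathlib

section
/- Let v be a monotone valuation on a finite set M of items and let c ∈ [0, 1] be a real number. Assume the cut-failed condition holds. If S and T are c-minimal bundles, g ∈ S, and T ⊆ (M\S) ∪ {g}, then also g ∈ T and S ⊆ (M\T) ∪ {g}. -/
/-- A bundle `S ⊆ M` is `c`-acceptable for valuation `v` if `v S ≥ c * v (M \ S)`. -/
def Acceptable {ι : Type*} [DecidableEq ι] (M : Finset ι) (v : Finset ι → ℝ)
    (c : ℝ) (S : Finset ι) : Prop :=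
  v S ≥ c * v (M \ S)

/-- A bundle `S ⊆ M` is `c`-minimal if it is `c`-acceptable but no `S \ {g}` with
`g ∈ S` is `c`-acceptable. -/
def CMinimal {ι : Type*} [DecidableEq ι] (M : Finset ι) (v : Finset ι → ℝ)
    (c : ℝ) (S : Finset ι) : Prop :=
  S ⊆ M ∧ Acceptable M v c S ∧ ∀ g ∈ S, ¬ Acceptable M v c (S \ {g})

/-- The cut-failed condition: no subset `S` of `M` has both `S` and `M \ S`
`c`-acceptable. -/
def CutFailed {ι : Type*} [DecidableEq ι] (M : Finset ι) (v : Finset ι → ℝ)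
    (c : ℝ) : Prop :=
  ¬ ∃ S : Finset ι, S ⊆ M ∧ Acceptable M v c S ∧ Acceptable M v c (M \ S)

/-! If `g ∉ T`, the hypothesis makes `S` and `T` disjoint. By monotonicity and `c ≥ 0`,
`c · v T ≤ c · v (M \ S) ≤ v S ≤ v (M \ T)`, so the complement of `T` is acceptable along
with `T` itself, which the cut-failed condition forbids. The inclusion `S ⊆ (M \ T) ∪ {g}` is
set bookkeeping: the hypothesis says `S ∩ T ⊆ {g}`, a symmetric condition. -/

section Finset

variable {ι : Type*} [DecidableEq ι] {M S T : Finset ι} {g : ι}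

theorem Finset.disjoint_of_subset_sdiff_union_singleton (hsub : T ⊆ (M \ S) ∪ {g})
    (hg : g ∉ T) : Disjoint S T := by
  rw [Finset.disjoint_right]
  intro x hxT hxS
  rcases Finset.mem_union.mp (hsub hxT) with h | h
  · exact (Finset.mem_sdiff.mp h).2 hxS
  · exact hg (Finset.mem_singleton.mp h ▸ hxT)

theorem Finset.subset_sdiff_union_singleton_symm (hSM : S ⊆ M)
    (hsub : T ⊆ (M \ S) ∪ {g}) : S ⊆ (M \ T) ∪ {g} := by
  intro x hxS
  by_cases hxg : x = g
  · simp [hxg]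
  · have hxT : x ∉ T := fun hxT => by
      have := hsub hxT
      simp_all
    simp [hSM hxS, hxT]

end Finset

section Acceptable

variable {ι : Type*} [DecidableEq ι] {M : Finset ι} {v : Finset ι → ℝ} {c : ℝ}
  {S T : Finset ι}

theorem Acceptable.sdiff_of_disjoint
    (hmono : ∀ S T : Finset ι, S ⊆ T → T ⊆ M → v S ≤ v T) (hc : 0 ≤ c)
    (hSM : S ⊆ M) (hTM : T ⊆ M) (hST : Disjoint S T) (hS : Acceptable M v c S) :
    Acceptable M v c (M \ T) := by
  have hTS : T ⊆ M \ S := Finset.subset_sdiff.mpr ⟨hTM, hST.symm⟩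
  have hST' : S ⊆ M \ T := Finset.subset_sdiff.mpr ⟨hSM, hST⟩
  unfold Acceptable
  rw [Finset.sdiff_sdiff_eq_self hTM]
  calc c * v T ≤ c * v (M \ S) :=
        mul_le_mul_of_nonneg_left (hmono _ _ hTS Finset.sdiff_subset) hc
    _ ≤ v S := hS
    _ ≤ v (M \ T) := hmono _ _ hST' Finset.sdiff_subset

theorem CutFailed.not_disjoint
    (hmono : ∀ S T : Finset ι, S ⊆ T → T ⊆ M → v S ≤ v T) (hc : 0 ≤ c)
    (hcut : CutFailed M v c) (hSM : S ⊆ M) (hTM : T ⊆ M)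
    (hS : Acceptable M v c S) (hT : Acceptable M v c T) : ¬ Disjoint S T :=
  fun hST => hcut ⟨T, hTM, hT, hS.sdiff_of_disjoint hmono hc hSM hTM hST⟩

end Acceptable

theorem graph_symmetric_general {ι : Type*} [DecidableEq ι] (M : Finset ι)
    (v : Finset ι → ℝ)
    (hmono : ∀ S T : Finset ι, S ⊆ T → T ⊆ M → v S ≤ v T)
    (c : ℝ) (hc0 : 0 ≤ c)
    (hcut : CutFailed M v c)
    (S T : Finset ι) (hS : CMinimal M v c S) (hT : CMinimal M v c T)
    (g : ι) (hsub : T ⊆ (M \ S) ∪ {g}) :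
    g ∈ T ∧ S ⊆ (M \ T) ∪ {g} := by
  obtain ⟨hSM, hSacc, -⟩ := hS
  obtain ⟨hTM, hTacc, -⟩ := hT
  refine ⟨?_, Finset.subset_sdiff_union_singleton_symm hSM hsub⟩
  by_contra hgT
  exact hcut.not_disjoint hmono hc0 hSM hTM hSacc hTacc
    (Finset.disjoint_of_subset_sdiff_union_singleton hsub hgT)

/-- For a monotone valuation and `c ∈ [0,1]`, under the cut-failed condition, if `S`
and `T` are `c`-minimal, `g ∈ S` and `T ⊆ (M \ S) ∪ {g}`, then also `g ∈ T` and
`S ⊆ (M \ T) ∪ {g}`. -/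
theorem graph_symmetric {ι : Type*} [DecidableEq ι] (M : Finset ι)
    (v : Finset ι → ℝ) (h0 : v ∅ = 0)
    (hmono : ∀ S T : Finset ι, S ⊆ T → T ⊆ M → v S ≤ v T)
    (c : ℝ) (hc0 : 0 ≤ c) (hc1 : c ≤ 1)
    (hcut : CutFailed M v c)
    (S T : Finset ι) (hS : CMinimal M v c S) (hT : CMinimal M v c T)
    (g : ι) (hg : g ∈ S) (hsub : T ⊆ (M \ S) ∪ {g}) :
    g ∈ T ∧ S ⊆ (M \ T) ∪ {g} :=
  graph_symmetric_general M v hmono c hc0 hcut S T hS hT g hsub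
end

section
/- Let v be a monotone submodular valuation on a finite set M of items with v(M) = 1, and let c ∈ [0, 1) be a real number. Assume the cut-failed condition holds. Let E be the set of ordered pairs (S, T) of c-minimal bundles such that there exists g ∈ S with T ⊆ (M\S) ∪ {g}, and let E₊ be the set of pairs (S, T) ∈ E for which every g ∈ S with T ⊆ (M\S) ∪ {g} satisfies v(S) − v(S\{g}) ≥ (1 − c)/2. Then 2·|E₊| ≥ |E|. -/
/-!
Cut failure forces any two acceptable bundles to meet: if `T ⊆ M \ S`, then `M \ S ⊇ T` is
acceptable as well. Hence for an edge `(S, T)` the witness `g` is the unique element of `S ∩ T`,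
and `(T, S)` is an edge with the same unique witness. If `g` has marginal value below `(1 - c)/2`
in `S`, then minimality of `S` (`S \ {g}` is not acceptable) together with cut failure for `S`
forces the marginal value of `g` on `M \ S` to be at least `(1 - c)/2`, and submodularity passes
this bound on to `T ⊆ (M \ S) ∪ {g}`. So swapping the pair maps `E \ E₊` injectively into `E₊`.
-/

open Finset

def IsMinimalBundleEdge {ι : Type*} [DecidableEq ι] (M : Finset ι) (v : Finset ι → ℝ) (c : ℝ)
    (S T : Finset ι) : Prop :=
  CMinimal M v c S ∧ CMinimal M v c T ∧ ∃ g ∈ S, T ⊆ (M \ S) ∪ {g}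

def IsSpecialMinimalBundleEdge {ι : Type*} [DecidableEq ι] (M : Finset ι) (v : Finset ι → ℝ)
    (c : ℝ) (S T : Finset ι) : Prop :=
  IsMinimalBundleEdge M v c S T ∧
    ∀ g ∈ S, T ⊆ (M \ S) ∪ {g} → v S - v (S \ {g}) ≥ (1 - c) / 2

theorem Set.ncard_le_two_mul_ncard_of_injOn {α : Type*} {E P : Set α} (hE : E.Finite)
    (hPE : P ⊆ E) {f : α → α} (hf : Set.MapsTo f (E \ P) P) (hinj : Set.InjOn f (E \ P)) :
    E.ncard ≤ 2 * P.ncard := by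
  have hle := Set.ncard_le_ncard_of_injOn f hf hinj (hE.subset hPE)
  have hsum := Set.ncard_sdiff_add_ncard_of_subset hPE hE
  omega

section

variable {ι : Type*} [DecidableEq ι] {M S T : Finset ι} {v : Finset ι → ℝ} {c : ℝ} {g : ι}

theorem subset_sdiff_union_singleton_iff (hT : T ⊆ M) :
    T ⊆ (M \ S) ∪ {g} ↔ S ∩ T ⊆ {g} := by
  simp only [subset_iff, mem_union, mem_sdiff, mem_inter, mem_singleton]
  exact ⟨fun h x ⟨hxS, hxT⟩ => (h hxT).resolve_left fun h' => h'.2 hxS,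
    fun h x hxT => (em (x ∈ S)).elim (fun hxS => .inr (h ⟨hxS, hxT⟩)) fun hxS => .inl ⟨hT hxT, hxS⟩⟩

theorem union_le_add_of_submodular (h0 : v ∅ = 0)
    (hsubmod : ∀ S T : Finset ι, S ⊆ T → T ⊆ M → ∀ g ∈ M,
      v (T ∪ {g}) - v T ≤ v (S ∪ {g}) - v S)
    {A B : Finset ι} (hA : A ⊆ M) (hB : B ⊆ M) : v (A ∪ B) ≤ v A + v B := by
  induction B using Finset.induction_on with
  | empty => simp [h0]
  | insert x B _ ih =>
    rw [insert_subset_iff] at hB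
    have hstep := hsubmod B (A ∪ B) subset_union_right (union_subset hA hB.2) x hB.1
    rw [union_insert, insert_eq, union_comm {x}, insert_eq, union_comm {x}]
    linarith [ih hB.2]

theorem Acceptable.mono (hc : 0 ≤ c) (hmono : ∀ S T : Finset ι, S ⊆ T → T ⊆ M → v S ≤ v T)
    (hS : Acceptable M v c S) (hST : S ⊆ T) (hT : T ⊆ M) : Acceptable M v c T :=
  calc c * v (M \ T) ≤ c * v (M \ S) :=
        mul_le_mul_of_nonneg_left (hmono _ _ (sdiff_subset_sdiff le_rfl hST) sdiff_subset) hc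
    _ ≤ v S := hS
    _ ≤ v T := hmono S T hST hT

theorem CutFailed.compl_lt (hcut : CutFailed M v c) (hS : S ⊆ M) (hacc : Acceptable M v c S) :
    v (M \ S) < c * v S := by
  by_contra! h
  exact hcut ⟨S, hS, hacc, by rwa [Acceptable, Finset.sdiff_sdiff_eq_self hS]⟩

theorem CutFailed.inter_nonempty (hcut : CutFailed M v c) (hc : 0 ≤ c)
    (hmono : ∀ S T : Finset ι, S ⊆ T → T ⊆ M → v S ≤ v T)
    (hS : S ⊆ M) (hSacc : Acceptable M v c S) (hT : T ⊆ M) (hTacc : Acceptable M v c T) :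
    (S ∩ T).Nonempty := by
  rw [← not_disjoint_iff_nonempty_inter]
  intro hdisj
  exact hcut ⟨S, hS, hSacc, hTacc.mono hc hmono (subset_sdiff.2 ⟨hT, hdisj.symm⟩) sdiff_subset⟩

theorem CMinimal.half_le_compl_marginal (hS : CMinimal M v c S) (hcut : CutFailed M v c)
    (h0 : v ∅ = 0)
    (hsubmod : ∀ S T : Finset ι, S ⊆ T → T ⊆ M → ∀ g ∈ M,
      v (T ∪ {g}) - v T ≤ v (S ∪ {g}) - v S)
    (hM : v M = 1) (hc0 : 0 ≤ c) (hc1 : c < 1) (hg : g ∈ S)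
    (hsmall : v S - v (S \ {g}) < (1 - c) / 2) :
    (1 - c) / 2 ≤ v ((M \ S) ∪ {g}) - v (M \ S) := by
  have hcompl : M \ (S \ {g}) = (M \ S) ∪ {g} :=
    sdiff_sdiff_eq_sdiff_union (singleton_subset_iff.2 (hS.1 hg))
  have hnot : v (S \ {g}) < c * v ((M \ S) ∪ {g}) := by
    simpa [Acceptable, hcompl] using hS.2.2 g hg
  have hSg : S \ {g} ⊆ M := sdiff_subset.trans hS.1
  have hsub : 1 ≤ v (S \ {g}) + v ((M \ S) ∪ {g}) := by
    have h := union_le_add_of_submodular h0 hsubmod hSg (sdiff_subset : M \ (S \ {g}) ⊆ M)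
    rwa [union_sdiff_of_subset hSg, hM, hcompl] at h
  have hcomplS := hcut.compl_lt hS.1 hS.2.1
  -- With `q := v ((M \ S) ∪ {g})`: `1 ≤ v (S \ {g}) + q < (1 + c) q`, and
  -- `q - v (M \ S) > q - c v S > q - c (c q + (1 - c) / 2) ≥ (1 - c) / 2` as `q > 1 / (1 + c) > 1 / 2`.
  have hq : 1 < (1 + c) * v ((M \ S) ∪ {g}) := by linarith
  nlinarith [mul_le_mul_of_nonneg_left hsmall.le hc0, mul_le_mul_of_nonneg_left hnot.le hc0,
    mul_pos (sub_pos.2 hc1) (sub_pos.2 hq), sq_nonneg (1 - c)]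

theorem IsMinimalBundleEdge.isSpecial_swap (hE : IsMinimalBundleEdge M v c S T)
    (hbad : ¬ IsSpecialMinimalBundleEdge M v c S T) (hcut : CutFailed M v c) (h0 : v ∅ = 0)
    (hmono : ∀ S T : Finset ι, S ⊆ T → T ⊆ M → v S ≤ v T)
    (hsubmod : ∀ S T : Finset ι, S ⊆ T → T ⊆ M → ∀ g ∈ M,
      v (T ∪ {g}) - v T ≤ v (S ∪ {g}) - v S)
    (hM : v M = 1) (hc0 : 0 ≤ c) (hc1 : c < 1) :
    IsSpecialMinimalBundleEdge M v c T S := by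
  obtain ⟨g, hgS, hTg, hsmall⟩ :
      ∃ g ∈ S, T ⊆ (M \ S) ∪ {g} ∧ v S - v (S \ {g}) < (1 - c) / 2 := by
    by_contra! h
    exact hbad ⟨hE, h⟩
  obtain ⟨hS, hT, -⟩ := hE
  have hST : S ∩ T = {g} :=
    (hcut.inter_nonempty hc0 hmono hS.1 hS.2.1 hT.1 hT.2.1).subset_singleton_iff.1
      ((subset_sdiff_union_singleton_iff hT.1).1 hTg)
  have hgT : g ∈ T := (mem_inter.1 (hST ▸ mem_singleton_self g)).2
  have hwitness : ∀ g', S ⊆ (M \ T) ∪ {g'} ↔ g' = g := by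
    intro g'
    rw [subset_sdiff_union_singleton_iff hS.1, inter_comm, hST, singleton_subset_singleton, eq_comm]
  refine ⟨⟨hT, hS, g, hgT, (hwitness g).2 rfl⟩, fun g' _ hg' => ?_⟩
  obtain rfl := (hwitness g').1 hg'
  have hTsub : T \ {g'} ⊆ M \ S := sdiff_le_iff.2 (by rwa [union_comm] at hTg)
  have hmarg := hsubmod _ _ hTsub sdiff_subset g' (hS.1 hgS)
  rw [sdiff_union_of_subset (singleton_subset_iff.2 hgT)] at hmarg
  linarith [hS.half_le_compl_marginal hcut h0 hsubmod hM hc0 hc1 hgS hsmall]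

theorem setOf_isMinimalBundleEdge_finite :
    {p : Finset ι × Finset ι | IsMinimalBundleEdge M v c p.1 p.2}.Finite :=
  (M.powerset ×ˢ M.powerset).finite_toSet.subset fun p hp => by
    simpa using And.intro hp.1.1 hp.2.1.1

end

/-- For a monotone submodular valuation with `v M = 1` and `c ∈ [0,1)`, under the
cut-failed condition, at least half of the edges of the minimal bundle graph are
special: `2 * |E₊| ≥ |E|`. -/
theorem e_plus_size {ι : Type*} [DecidableEq ι] (M : Finset ι)
    (v : Finset ι → ℝ) (h0 : v ∅ = 0)
    (hmono : ∀ S T : Finset ι, S ⊆ T → T ⊆ M → v S ≤ v T)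
    (hsubmod : ∀ S T : Finset ι, S ⊆ T → T ⊆ M → ∀ g ∈ M,
      v (T ∪ {g}) - v T ≤ v (S ∪ {g}) - v S)
    (hM : v M = 1) (c : ℝ) (hc0 : 0 ≤ c) (hc1 : c < 1)
    (hcut : CutFailed M v c) :
    2 * {p : Finset ι × Finset ι |
          (CMinimal M v c p.1 ∧ CMinimal M v c p.2 ∧
            ∃ g ∈ p.1, p.2 ⊆ (M \ p.1) ∪ {g}) ∧
          ∀ g ∈ p.1, p.2 ⊆ (M \ p.1) ∪ {g} →
            v p.1 - v (p.1 \ {g}) ≥ (1 - c) / 2}.ncard ≥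
      {p : Finset ι × Finset ι |
          CMinimal M v c p.1 ∧ CMinimal M v c p.2 ∧
            ∃ g ∈ p.1, p.2 ⊆ (M \ p.1) ∪ {g}}.ncard := by
  change {p : Finset ι × Finset ι | IsMinimalBundleEdge M v c p.1 p.2}.ncard ≤
    2 * {p : Finset ι × Finset ι | IsSpecialMinimalBundleEdge M v c p.1 p.2}.ncard
  refine Set.ncard_le_two_mul_ncard_of_injOn setOf_isMinimalBundleEdge_finite
    (fun p hp => hp.1) ?_ Prod.swap_injective.injOn
  rintro ⟨S, T⟩ ⟨hE, hbad⟩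
  exact hE.isSpecial_swap hbad hcut h0 hmono hsubmod hM hc0 hc1
end
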